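/- Let Γ ≠ {±1} be a discrete subgroup of SL(2,ℝ) in which the only elements fixing ∞ are ±1, and suppose there are real numbers α ≤ β with I(g) ⊆ {z ∈ ℍ : α ≤ Re z ≤ β} for every g ∈ Γ \ {±1}. Choose α' < α and β' > β, and form λ, t_λ, W and Γ_W as in the context. Then the isometric spheres of Γ_W contributing non-trivially to the boundary of W coincide with the relevant isometric spheres of Γ: for h ∈ Γ_W with h·∞ ≠ ∞, the set I(h) ∩ ∂W contains more than one point (∂W denoting the frontier of W in ℍ) if and only if I(h) = I(g) for some g ∈ Γ \ {±1} whose isometric sphere I(g) is relevant. -/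

import Mathlib

open Complex Matrix Filter

noncomputable section

abbrev SL2R := Matrix.SpecialLinearGroup (Fin 2) ℝ

/-- The upper half-plane, as a subset of `ℂ`. -/
def UH : Set ℂ := {z : ℂ | 0 < z.im}

/-- Möbius action of `SL(2,ℝ)` on `ℂ`. -/
def moeb (g : SL2R) (z : ℂ) : ℂ :=
  ((g 0 0 : ℂ) * z + (g 0 1 : ℂ)) / ((g 1 0 : ℂ) * z + (g 1 1 : ℂ))

/-- The isometric sphere of `g` (requires `g 1 0 ≠ 0` to be meaningful). -/
def isoSphere (g : SL2R) : Set ℂ :=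
  {z ∈ UH | ‖(g 1 0 : ℂ) * z + (g 1 1 : ℂ)‖ = 1}

/-- The interior of the isometric sphere of `g`. -/
def isoInt (g : SL2R) : Set ℂ :=
  {z ∈ UH | ‖(g 1 0 : ℂ) * z + (g 1 1 : ℂ)‖ < 1}

/-- The exterior of the isometric sphere of `g`. -/
def isoExt (g : SL2R) : Set ℂ :=
  {z ∈ UH | 1 < ‖(g 1 0 : ℂ) * z + (g 1 1 : ℂ)‖}

/-- `g = 1` or `g = -1` (stated at the matrix level). -/
def IsPMOne (g : SL2R) : Prop :=
  (g : Matrix (Fin 2) (Fin 2) ℝ) = 1 ∨ (g : Matrix (Fin 2) (Fin 2) ℝ) = -1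

/-- Discreteness of a subgroup of `SL(2,ℝ)`: every element is isolated
(entrywise, which is equivalent to discreteness in the matrix topology). -/
def IsDiscreteSubgroup (Γ : Subgroup SL2R) : Prop :=
  ∀ g ∈ Γ, ∃ ε > (0 : ℝ), ∀ h ∈ Γ,
    (∀ i j, |(h : Matrix (Fin 2) (Fin 2) ℝ) i j - (g : Matrix (Fin 2) (Fin 2) ℝ) i j| < ε) → h = g

/-- The parabolic translation `t_λ = [[1,λ],[0,1]]` as an element of `SL(2,ℝ)`. -/
def tMat (l : ℝ) : SL2R := ⟨!![1, l; 0, 1], by norm_num [Matrix.det_fin_two_of]⟩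

/-- The common exterior `K` of all isometric spheres of `Γ`. -/
def commonExt (Γ : Subgroup SL2R) : Set ℂ :=
  ⋂ g ∈ {g : SL2R | g ∈ Γ ∧ ¬ IsPMOne g}, isoExt g

/-- An isometric sphere is relevant if it meets the frontier (in `ℍ`) of the
common exterior in more than one point. -/
def IsRelevant (Γ : Subgroup SL2R) (g : SL2R) : Prop :=
  (isoSphere g ∩ (frontier (commonExt Γ) ∩ UH)).Nontrivial

/-- The summit `-d/c + i/|c|` of the isometric sphere of `g`. -/
def summit (g : SL2R) : ℂ :=
  ((-(g 1 1) / g 1 0 : ℝ) : ℂ) + ((1 / |g 1 0| : ℝ) : ℂ) * Complex.I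

/-!
Every element of `Γ_W` can be written as `±1 · ℓ₁ ⋯ ℓₙ · t_λ^a`, where each letter
`ℓᵢ = t_λ^{mᵢ} gᵢ t_λ^{-mᵢ}` has `gᵢ ∈ Γ \ {±1}` and consecutive shifts `mᵢ` differ. The closed
isometric disc of `ℓᵢ` lies over the strip `α + mᵢλ ≤ Re z ≤ β + mᵢλ`, and these strips are
pairwise disjoint because `λ > β - α`. A ping-pong argument with the cocycle relation
`J(gh, z) = J(g, hz) J(h, z)` for `J(g, z) = cz + d` shows that a point outside the open discs
of all letters satisfies `|J(ℓ₁ ⋯ ℓₙ, z)| ≥ 1`, strictly if `n ≥ 2`.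

A point `z` of the closure of `W` lies over `[α', β']` and outside the isometric discs of `Γ`, so
`z + aλ` lies outside the open discs of all letters, and even outside their closed discs unless
`mᵢ = a`. Hence `I(h)` meets the closure of `W` only if `n = 1` and `m₁ = a`, that is
`I(h) = I(g₁)`. Finally `I(g)` lies inside the open strip `α' < Re z < β'`, where the frontiers of
`W` and of `K` agree.
-/

open UpperHalfPlane (denom)

lemma isPMOne_iff {g : SL2R} : IsPMOne g ↔ g = 1 ∨ g = -1 :=
  or_congr ⟨fun h => Subtype.ext h, fun h => h ▸ rfl⟩ ⟨fun h => Subtype.ext h, fun h => h ▸ rfl⟩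

lemma isPMOne_one : IsPMOne 1 := Or.inl rfl

lemma IsPMOne.commute {s : SL2R} (hs : IsPMOne s) (g : SL2R) : Commute s g := by
  rcases isPMOne_iff.mp hs with rfl | rfl
  · exact Commute.one_left g
  · exact (Commute.one_left g).neg_left

lemma IsPMOne.mul {s s' : SL2R} (hs : IsPMOne s) (hs' : IsPMOne s') : IsPMOne (s * s') := by
  rcases isPMOne_iff.mp hs with rfl | rfl <;> rcases isPMOne_iff.mp hs' with rfl | rfl <;>
    simp [isPMOne_iff]

lemma IsPMOne.inv {s : SL2R} (hs : IsPMOne s) : IsPMOne s⁻¹ := by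
  rcases isPMOne_iff.mp hs with rfl | rfl <;> simp [isPMOne_iff]

lemma norm_denom_isPMOne_mul {s : SL2R} (hs : IsPMOne s) (g : SL2R) (z : ℂ) :
    ‖denom (s * g : SL2R) z‖ = ‖denom g z‖ := by
  rcases isPMOne_iff.mp hs with rfl | rfl
  · rw [one_mul]
  · rw [neg_one_mul, ← norm_neg (denom g z)]
    simp [denom, SpecialLinearGroup.coe_neg, add_comm]

@[simp] lemma tMat_apply_zero_zero (x : ℝ) : tMat x 0 0 = 1 := rfl
@[simp] lemma tMat_apply_zero_one (x : ℝ) : tMat x 0 1 = x := rfl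
@[simp] lemma tMat_apply_one_zero (x : ℝ) : tMat x 1 0 = 0 := rfl
@[simp] lemma tMat_apply_one_one (x : ℝ) : tMat x 1 1 = 1 := rfl

lemma IsPMOne.mul_tMat_apply_one_zero {s : SL2R} (hs : IsPMOne s) (x : ℝ) :
    (s * tMat x) 1 0 = 0 := by
  rcases isPMOne_iff.mp hs with rfl | rfl <;> simp [SpecialLinearGroup.coe_neg]

lemma tMat_zero : tMat 0 = 1 := by
  ext i j
  fin_cases i <;> fin_cases j <;> simp

lemma tMat_add (x y : ℝ) : tMat (x + y) = tMat x * tMat y := by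
  ext i j
  fin_cases i <;> fin_cases j <;> simp [Matrix.mul_apply, Fin.sum_univ_two, add_comm]

lemma tMat_neg (x : ℝ) : tMat (-x) = (tMat x)⁻¹ :=
  eq_inv_of_mul_eq_one_left (by rw [← tMat_add, neg_add_cancel, tMat_zero])

lemma denom_tMat_mul (x : ℝ) (g : SL2R) (z : ℂ) : denom (tMat x * g : SL2R) z = denom g z := by
  simp [denom, Matrix.mul_apply, Fin.sum_univ_two]

lemma denom_mul_tMat (g : SL2R) (x : ℝ) (z : ℂ) :
    denom (g * tMat x : SL2R) z = denom g (z + x) := by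
  simp only [denom, map_mul, Units.val_mul, SpecialLinearGroup.coe_GL_coe_matrix, Matrix.mul_apply,
    Fin.sum_univ_two, tMat_apply_zero_zero, tMat_apply_one_zero, tMat_apply_zero_one,
    tMat_apply_one_one, ofReal_add, ofReal_mul, ofReal_one, ofReal_zero]
  ring

lemma denom_mul (g h : SL2R) {z : ℂ} (hz : 0 < z.im) :
    denom (g * h : SL2R) z = denom g (moeb h z) * denom h z := by
  rw [map_mul]
  exact UpperHalfPlane.denom_cocycle _ _ hz.ne'

lemma moeb_eq_coe_smul (g : SL2R) {z : ℂ} (hz : 0 < z.im) :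
    moeb g z = ↑(g • UpperHalfPlane.mk z hz) := by
  simp [UpperHalfPlane.coe_specialLinearGroup_apply, moeb]

lemma moeb_im_pos (g : SL2R) {z : ℂ} (hz : 0 < z.im) : 0 < (moeb g z).im := by
  rw [moeb_eq_coe_smul g hz]
  exact UpperHalfPlane.im_pos _

lemma moeb_mul (g h : SL2R) {z : ℂ} (hz : 0 < z.im) : moeb (g * h) z = moeb g (moeb h z) := by
  have hh : h • UpperHalfPlane.mk z hz = UpperHalfPlane.mk (moeb h z) (moeb_im_pos h hz) :=
    UpperHalfPlane.ext (moeb_eq_coe_smul h hz).symm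
  rw [moeb_eq_coe_smul _ hz, mul_smul, hh, ← moeb_eq_coe_smul]

lemma mem_isoSphere {g : SL2R} {z : ℂ} : z ∈ isoSphere g ↔ 0 < z.im ∧ ‖denom g z‖ = 1 :=
  Iff.rfl

lemma isoSphere_eq_of_norm_denom_eq {g g' : SL2R} (h : ∀ z, ‖denom g z‖ = ‖denom g' z‖) :
    isoSphere g = isoSphere g' := by
  ext z
  simp only [mem_isoSphere, h]

lemma exists_mem_isoSphere_re_eq {g : SL2R} (hc : g 1 0 ≠ 0) {z : ℂ} (hz : 0 < z.im)
    (hle : ‖denom g z‖ ≤ 1) : ∃ w ∈ isoSphere g, w.re = z.re := by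
  have hsq : ∀ w : ℂ, ‖denom g w‖ ^ 2 = (g 1 0 * w.re + g 1 1) ^ 2 + (g 1 0 * w.im) ^ 2 := by
    intro w
    rw [Complex.sq_norm, Complex.normSq_apply]
    simp only [denom, SpecialLinearGroup.coe_GL_coe_matrix, add_re, mul_re, ofReal_re, ofReal_im,
      add_im, mul_im]
    ring
  set s := g 1 0 * z.re + g 1 1
  -- On the vertical line through `z` the sphere sits at height `√(1 - s²) / |c|`.
  have hs : s ^ 2 < 1 := by
    have := hsq z
    have : 0 < (g 1 0 * z.im) ^ 2 := by positivity
    nlinarith [norm_nonneg (denom g z)]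
  refine ⟨⟨z.re, √(1 - s ^ 2) / |g 1 0|⟩, mem_isoSphere.mpr ⟨?_, ?_⟩, rfl⟩
  · have : 0 < √(1 - s ^ 2) := Real.sqrt_pos.mpr (by linarith)
    positivity
  · rw [← pow_left_inj₀ (norm_nonneg _) zero_le_one two_ne_zero, hsq]
    simp only [mul_div_assoc', div_pow, mul_pow, sq_abs, Real.sq_sqrt (by linarith : 0 ≤ 1 - s ^ 2)]
    field_simp
    ring

lemma re_mem_Icc_of_norm_denom_le_one {g : SL2R} {α β : ℝ} (hc : g 1 0 ≠ 0)
    (hI : isoSphere g ⊆ {z ∈ UH | α ≤ z.re ∧ z.re ≤ β}) {z : ℂ} (hz : 0 < z.im)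
    (hle : ‖denom g z‖ ≤ 1) : z.re ∈ Set.Icc α β := by
  obtain ⟨w, hw, hwz⟩ := exists_mem_isoSphere_re_eq hc hz hle
  rw [← hwz]
  exact (hI hw).2

lemma eq_zero_of_mem_Icc_of_add_mul_mem_Icc {a b c d x lam : ℝ} {k : ℤ} (hbc : b - c < lam)
    (hda : d - a < lam) (hx : x ∈ Set.Icc a b) (hxk : x + k * lam ∈ Set.Icc c d) : k = 0 := by
  obtain ⟨hax, hxb⟩ := hx
  obtain ⟨hcx, hxd⟩ := hxk
  have hlam : 0 < lam := by linarith
  rcases lt_trichotomy k 0 with hk | hk | hk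
  · have : (k : ℝ) ≤ -1 := by exact_mod_cast Int.le_sub_one_of_lt hk
    nlinarith
  · exact hk
  · have : (1 : ℝ) ≤ k := by exact_mod_cast hk
    nlinarith

def letter (lam : ℝ) (p : ℤ × SL2R) : SL2R := MulAut.conj (tMat (p.1 * lam)) p.2

def wordProd (lam : ℝ) (L : List (ℤ × SL2R)) : SL2R := (L.map (letter lam)).prod

def shiftWord (k : ℤ) (L : List (ℤ × SL2R)) : List (ℤ × SL2R) := L.map fun p => (p.1 + k, p.2)

def IsReducedWord (Γ : Subgroup SL2R) (L : List (ℤ × SL2R)) : Prop :=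
  (∀ p ∈ L, p.2 ∈ Γ ∧ ¬ IsPMOne p.2) ∧ L.IsChain fun p q => p.1 ≠ q.1

section Words

variable {Γ : Subgroup SL2R} {lam : ℝ}

lemma denom_letter (lam : ℝ) (p : ℤ × SL2R) (z : ℂ) :
    denom (letter lam p) z = denom p.2 (z - (p.1 * lam : ℝ)) := by
  rw [letter, MulAut.conj_apply, ← tMat_neg, denom_mul_tMat, denom_tMat_mul, ofReal_neg,
    sub_eq_add_neg]

lemma letter_inv (lam : ℝ) (p : ℤ × SL2R) : (letter lam p)⁻¹ = letter lam (p.1, p.2⁻¹) :=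
  (map_inv _ _).symm

lemma letter_zero (lam : ℝ) (g : SL2R) : letter lam (0, g) = g := by
  simp [letter, tMat_zero]

lemma tMat_mul_letter (lam : ℝ) (k : ℤ) (p : ℤ × SL2R) :
    tMat (k * lam) * letter lam p = letter lam (p.1 + k, p.2) * tMat (k * lam) := by
  have : tMat ((p.1 + k : ℤ) * lam) = tMat (k * lam) * tMat (p.1 * lam) := by
    rw [← tMat_add]
    push_cast
    ring_nf
  rw [letter, letter, this, map_mul, MulAut.mul_apply]
  simp only [MulAut.conj_apply, inv_mul_cancel_right]

@[simp] lemma wordProd_nil (lam : ℝ) : wordProd lam [] = 1 := rfl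

@[simp] lemma wordProd_cons (lam : ℝ) (p : ℤ × SL2R) (L : List (ℤ × SL2R)) :
    wordProd lam (p :: L) = letter lam p * wordProd lam L := by
  simp [wordProd]

lemma tMat_mul_wordProd (lam : ℝ) (k : ℤ) (L : List (ℤ × SL2R)) :
    tMat (k * lam) * wordProd lam L = wordProd lam (shiftWord k L) * tMat (k * lam) := by
  induction L with
  | nil => simp [shiftWord]
  | cons p L ih =>
    simp only [shiftWord, List.map_cons, wordProd_cons] at ih ⊢
    rw [← mul_assoc, tMat_mul_letter, mul_assoc, ih, mul_assoc]

lemma IsReducedWord.of_cons {p : ℤ × SL2R} {L : List (ℤ × SL2R)}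
    (hL : IsReducedWord Γ (p :: L)) : IsReducedWord Γ L :=
  ⟨fun q hq => hL.1 q (List.mem_cons_of_mem p hq), hL.2.tail⟩

lemma IsReducedWord.head {p : ℤ × SL2R} {L : List (ℤ × SL2R)}
    (hL : IsReducedWord Γ (p :: L)) : p.2 ∈ Γ ∧ ¬ IsPMOne p.2 :=
  hL.1 p List.mem_cons_self

lemma IsReducedWord.fst_ne {p q : ℤ × SL2R} {L : List (ℤ × SL2R)}
    (hL : IsReducedWord Γ (p :: q :: L)) : p.1 ≠ q.1 :=
  (List.isChain_cons_cons.mp hL.2).1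

lemma IsReducedWord.cons {p q : ℤ × SL2R} {L : List (ℤ × SL2R)}
    (hp : p.2 ∈ Γ ∧ ¬ IsPMOne p.2) (hpq : p.1 ≠ q.1) (hL : IsReducedWord Γ (q :: L)) :
    IsReducedWord Γ (p :: q :: L) :=
  ⟨List.forall_mem_cons.mpr ⟨hp, hL.1⟩, List.isChain_cons_cons.mpr ⟨hpq, hL.2⟩⟩

lemma IsReducedWord.shift {L : List (ℤ × SL2R)} (hL : IsReducedWord Γ L) (k : ℤ) :
    IsReducedWord Γ (shiftWord k L) :=
  ⟨List.forall_mem_map.mpr fun p hp => hL.1 p hp,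
    List.isChain_map_of_isChain _ (fun p q h => by simpa using h) hL.2⟩

lemma IsReducedWord.cons_of_fst_eq {p p' : ℤ × SL2R} {L : List (ℤ × SL2R)}
    (hL : IsReducedWord Γ (p :: L)) (hp' : p'.2 ∈ Γ ∧ ¬ IsPMOne p'.2) (h : p'.1 = p.1) :
    IsReducedWord Γ (p' :: L) := by
  cases L with
  | nil => exact ⟨by simpa using hp', List.isChain_singleton _⟩
  | cons q L => exact IsReducedWord.cons hp' (h ▸ hL.fst_ne) hL.of_cons

lemma exists_isReducedWord_mul_wordProd {x : SL2R} (hx : x ∈ Γ) {L : List (ℤ × SL2R)}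
    (hL : IsReducedWord Γ L) :
    ∃ s L', IsPMOne s ∧ IsReducedWord Γ L' ∧ x * wordProd lam L = s * wordProd lam L' := by
  by_cases hxpm : IsPMOne x
  · exact ⟨x, L, hxpm, hL, rfl⟩
  match L, hL with
  | [], _ => exact ⟨1, [(0, x)], isPMOne_one, ⟨by simpa using ⟨hx, hxpm⟩, List.isChain_singleton _⟩,
      by simp [letter_zero]⟩
  | (m, g) :: L', hL =>
    obtain rfl | hm := eq_or_ne m 0
    · by_cases hxg : IsPMOne (x * g)
      · exact ⟨x * g, L', hxg, hL.of_cons, by simp [letter_zero, mul_assoc]⟩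
      · exact ⟨1, (0, x * g) :: L', isPMOne_one,
          hL.cons_of_fst_eq ⟨mul_mem hx hL.head.1, hxg⟩ rfl, by simp [letter_zero, mul_assoc]⟩
    · refine ⟨1, (0, x) :: (m, g) :: L', isPMOne_one, hL.cons ⟨hx, hxpm⟩ hm.symm, ?_⟩
      simp [letter_zero]

end Words

def HasNormalForm (Γ : Subgroup SL2R) (lam : ℝ) (h : SL2R) : Prop :=
  ∃ s L, ∃ a : ℤ, IsPMOne s ∧ IsReducedWord Γ L ∧ h = s * wordProd lam L * tMat (a * lam)

section NormalForm

variable {Γ : Subgroup SL2R} {lam : ℝ}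

lemma hasNormalForm_one : HasNormalForm Γ lam 1 :=
  ⟨1, [], 0, isPMOne_one, ⟨by simp, List.isChain_nil⟩, by simp [tMat_zero]⟩

lemma HasNormalForm.tMat_mul {h : SL2R} (hh : HasNormalForm Γ lam h) (k : ℤ) :
    HasNormalForm Γ lam (tMat (k * lam) * h) := by
  obtain ⟨s, L, a, hs, hL, rfl⟩ := hh
  refine ⟨s, shiftWord k L, a + k, hs, hL.shift k, ?_⟩
  calc tMat (k * lam) * (s * wordProd lam L * tMat (a * lam))
      = s * (tMat (k * lam) * wordProd lam L) * tMat (a * lam) := by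
        simp only [mul_assoc, ((hs.commute _).left_comm _).symm]
    _ = s * wordProd lam (shiftWord k L) * tMat ((a + k : ℤ) * lam) := by
        rw [tMat_mul_wordProd, mul_assoc, mul_assoc, ← tMat_add, ← mul_assoc]
        push_cast
        ring_nf

lemma HasNormalForm.mul_left {x h : SL2R} (hx : x ∈ Γ) (hh : HasNormalForm Γ lam h) :
    HasNormalForm Γ lam (x * h) := by
  obtain ⟨s, L, a, hs, hL, rfl⟩ := hh
  obtain ⟨s', L', hs', hL', hxL⟩ := exists_isReducedWord_mul_wordProd (lam := lam) hx hL
  refine ⟨s' * s, L', a, hs'.mul hs, hL', ?_⟩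
  calc x * (s * wordProd lam L * tMat (a * lam)) = s * (x * wordProd lam L) * tMat (a * lam) := by
        simp only [mul_assoc, ((hs.commute x).left_comm _).symm]
    _ = s' * s * wordProd lam L' * tMat (a * lam) := by
        rw [hxL, ← mul_assoc, (hs.commute s').eq]

lemma hasNormalForm_of_mem_closure {h : SL2R}
    (hh : h ∈ Subgroup.closure ((Γ : Set SL2R) ∪ {tMat lam})) : HasNormalForm Γ lam h := by
  induction hh using Subgroup.closure_induction_left with
  | one => exact hasNormalForm_one
  | mul_left x hx y _ ih =>
    rcases hx with hx | rfl
    · exact ih.mul_left hx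
    · simpa using ih.tMat_mul 1
  | inv_mul_cancel x hx y _ ih =>
    rcases hx with hx | rfl
    · exact ih.mul_left (inv_mem hx)
    · simpa [tMat_neg] using ih.tMat_mul (-1)

end NormalForm

def IsoDiscsInStrip (Γ : Subgroup SL2R) (α β : ℝ) : Prop :=
  ∀ g ∈ Γ, ¬ IsPMOne g → ∀ z : ℂ, 0 < z.im → ‖denom g z‖ ≤ 1 → z.re ∈ Set.Icc α β

lemma isoDiscsInStrip_of_isoSphere_subset {Γ : Subgroup SL2R} {α β : ℝ}
    (hstab : ∀ g ∈ Γ, g 1 0 = 0 → IsPMOne g)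
    (hbound : ∀ g ∈ Γ, ¬ IsPMOne g → isoSphere g ⊆ {z ∈ UH | α ≤ z.re ∧ z.re ≤ β}) :
    IsoDiscsInStrip Γ α β := fun g hg hgn _ hz hle =>
  re_mem_Icc_of_norm_denom_le_one (fun hc => hgn (hstab g hg hc)) (hbound g hg hgn) hz hle

lemma norm_denom_inv_moeb_le_one (x : SL2R) {z : ℂ} (hz : 0 < z.im) (h : 1 ≤ ‖denom x z‖) :
    ‖denom (x⁻¹ : SL2R) (moeb x z)‖ ≤ 1 := by
  have hprod : ‖denom (x⁻¹ : SL2R) (moeb x z)‖ * ‖denom x z‖ = 1 := by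
    rw [← norm_mul, ← denom_mul _ _ hz, inv_mul_cancel]
    simp [denom]
  calc ‖denom (x⁻¹ : SL2R) (moeb x z)‖ ≤ ‖denom (x⁻¹ : SL2R) (moeb x z)‖ * ‖denom x z‖ :=
        le_mul_of_one_le_right (norm_nonneg _) h
    _ = 1 := hprod

namespace IsoDiscsInStrip

variable {Γ : Subgroup SL2R} {α β α' β' lam : ℝ}

lemma re_sub_mem_Icc_of_letter (hΓ : IsoDiscsInStrip Γ α β) {p : ℤ × SL2R}
    (hp : p.2 ∈ Γ ∧ ¬ IsPMOne p.2) {z : ℂ} (hz : 0 < z.im) (hle : ‖denom (letter lam p) z‖ ≤ 1) :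
    z.re - p.1 * lam ∈ Set.Icc α β := by
  rw [denom_letter] at hle
  simpa using hΓ p.2 hp.1 hp.2 _ (by simpa using hz) hle

lemma one_lt_norm_denom_letter (hΓ : IsoDiscsInStrip Γ α β) (hsep : β - α < lam)
    {p : ℤ × SL2R} (hp : p.2 ∈ Γ ∧ ¬ IsPMOne p.2) {z : ℂ} (hz : 0 < z.im) {m : ℤ} (hm : p.1 ≠ m)
    (hzm : z.re - m * lam ∈ Set.Icc α β) : 1 < ‖denom (letter lam p) z‖ := by
  by_contra! hle
  have hshift : z.re - m * lam + ((m - p.1 : ℤ) : ℝ) * lam ∈ Set.Icc α β := by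
    convert hΓ.re_sub_mem_Icc_of_letter hp hz hle using 1
    push_cast
    ring
  exact hm (sub_eq_zero.mp (eq_zero_of_mem_Icc_of_add_mul_mem_Icc hsep hsep hzm hshift)).symm

lemma re_moeb_letter_sub_mem_Icc (hΓ : IsoDiscsInStrip Γ α β) {p : ℤ × SL2R}
    (hp : p.2 ∈ Γ ∧ ¬ IsPMOne p.2) {z : ℂ} (hz : 0 < z.im) (h : 1 ≤ ‖denom (letter lam p) z‖) :
    (moeb (letter lam p) z).re - p.1 * lam ∈ Set.Icc α β := by
  have hinv := norm_denom_inv_moeb_le_one _ hz h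
  rw [letter_inv] at hinv
  exact hΓ.re_sub_mem_Icc_of_letter (p := (p.1, p.2⁻¹))
    ⟨inv_mem hp.1, fun h => hp.2 (by simpa using h.inv)⟩ (moeb_im_pos _ hz) hinv

lemma re_moeb_wordProd_sub_mem_Icc (hΓ : IsoDiscsInStrip Γ α β) (hsep : β - α < lam) :
    ∀ {p : ℤ × SL2R} {L : List (ℤ × SL2R)}, IsReducedWord Γ (p :: L) → ∀ {z : ℂ}, 0 < z.im →
      1 ≤ ‖denom (wordProd lam (p :: L)) z‖ →
      (moeb (wordProd lam (p :: L)) z).re - p.1 * lam ∈ Set.Icc α β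
  | p, [], hL, z, hz, h => by
    simpa using hΓ.re_moeb_letter_sub_mem_Icc hL.head hz (by simpa using h)
  | p, q :: L, hL, z, hz, h => by
    set w := wordProd lam (q :: L)
    have hw : 0 < (moeb w z).im := moeb_im_pos w hz
    rw [wordProd_cons, denom_mul _ _ hz, norm_mul] at h
    -- Either `w z` lies over the strip of the next letter, hence outside the disc of `p`, or
    -- `|J(w, z)| < 1` and the cocycle relation pushes `|J(letter p, w z)|` above `1`.
    have hp : 1 ≤ ‖denom (letter lam p) (moeb w z)‖ := by
      rcases le_or_gt 1 ‖denom w z‖ with hwz | hwz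
      · exact (hΓ.one_lt_norm_denom_letter hsep hL.head hw hL.fst_ne
          (re_moeb_wordProd_sub_mem_Icc hΓ hsep hL.of_cons hz hwz)).le
      · nlinarith [norm_nonneg (denom (letter lam p) (moeb w z))]
    rw [wordProd_cons, moeb_mul _ _ hz]
    exact hΓ.re_moeb_letter_sub_mem_Icc hL.head hw hp

lemma one_lt_norm_denom_wordProd_cons_cons (hΓ : IsoDiscsInStrip Γ α β) (hsep : β - α < lam)
    {p q : ℤ × SL2R} {L : List (ℤ × SL2R)} (hL : IsReducedWord Γ (p :: q :: L)) {z : ℂ}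
    (hz : 0 < z.im) (h : 1 ≤ ‖denom (wordProd lam (q :: L)) z‖) :
    1 < ‖denom (wordProd lam (p :: q :: L)) z‖ := by
  rw [wordProd_cons lam p, denom_mul _ _ hz, norm_mul]
  exact one_lt_mul_of_lt_of_le (hΓ.one_lt_norm_denom_letter hsep hL.head (moeb_im_pos _ hz)
    hL.fst_ne (hΓ.re_moeb_wordProd_sub_mem_Icc hsep hL.of_cons hz h)) h

lemma one_le_norm_denom_wordProd (hΓ : IsoDiscsInStrip Γ α β) (hsep : β - α < lam) :
    ∀ {p : ℤ × SL2R} {L : List (ℤ × SL2R)}, IsReducedWord Γ (p :: L) → ∀ {z : ℂ}, 0 < z.im →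
      (∀ q ∈ p :: L, 1 ≤ ‖denom (letter lam q) z‖) → 1 ≤ ‖denom (wordProd lam (p :: L)) z‖
  | p, [], _, z, _, h => by simpa using h p List.mem_cons_self
  | p, q :: L, hL, z, hz, h =>
    (hΓ.one_lt_norm_denom_wordProd_cons_cons hsep hL hz (one_le_norm_denom_wordProd hΓ hsep
      hL.of_cons hz fun r hr => h r (List.mem_cons_of_mem p hr))).le

lemma one_lt_norm_denom_letter_add (hΓ : IsoDiscsInStrip Γ α β) (hα' : α' < α) (hβ' : β < β')
    {p : ℤ × SL2R} (hp : p.2 ∈ Γ ∧ ¬ IsPMOne p.2) {z : ℂ} (hz : 0 < z.im)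
    (hzre : z.re ∈ Set.Icc α' β') {a : ℤ} (ha : p.1 ≠ a) :
    1 < ‖denom (letter (β' - α') p) (z + (a * (β' - α') : ℝ))‖ := by
  by_contra! hle
  have hshift : z.re + ((a - p.1 : ℤ) : ℝ) * (β' - α') ∈ Set.Icc α β := by
    have h := hΓ.re_sub_mem_Icc_of_letter hp (by simpa using hz) hle
    rw [add_re, ofReal_re] at h
    convert h using 1
    push_cast
    ring
  exact ha (sub_eq_zero.mp (eq_zero_of_mem_Icc_of_add_mul_mem_Icc (by linarith) (by linarith)
    hzre hshift)).symm

lemma one_le_norm_denom_letter_add (hΓ : IsoDiscsInStrip Γ α β) (hα' : α' < α) (hβ' : β < β')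
    {p : ℤ × SL2R} (hp : p.2 ∈ Γ ∧ ¬ IsPMOne p.2) {z : ℂ} (hz : 0 < z.im)
    (hzre : z.re ∈ Set.Icc α' β') (hzK : ∀ g ∈ Γ, ¬ IsPMOne g → 1 ≤ ‖denom g z‖) (a : ℤ) :
    1 ≤ ‖denom (letter (β' - α') p) (z + (a * (β' - α') : ℝ))‖ := by
  obtain ha | ha := eq_or_ne p.1 a
  · rw [denom_letter, ha, add_sub_cancel_right]
    exact hzK p.2 hp.1 hp.2
  · exact (hΓ.one_lt_norm_denom_letter_add hα' hβ' hp hz hzre ha).le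

theorem exists_isoSphere_eq (hΓ : IsoDiscsInStrip Γ α β) (hα' : α' < α) (hβ' : β < β')
    {h : SL2R} (hh : h ∈ Subgroup.closure ((Γ : Set SL2R) ∪ {tMat (β' - α')})) (hc : h 1 0 ≠ 0)
    {z : ℂ} (hzh : z ∈ isoSphere h) (hzre : z.re ∈ Set.Icc α' β')
    (hzK : ∀ g ∈ Γ, ¬ IsPMOne g → 1 ≤ ‖denom g z‖) :
    ∃ g ∈ Γ, ¬ IsPMOne g ∧ isoSphere h = isoSphere g := by
  have hsep : β - α < β' - α' := by linarith
  obtain ⟨s, L, a, hs, hL, rfl⟩ := hasNormalForm_of_mem_closure hh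
  have hnorm : ∀ w : ℂ, ‖denom (s * wordProd (β' - α') L * tMat (a * (β' - α')) : SL2R) w‖ =
      ‖denom (wordProd (β' - α') L) (w + (a * (β' - α') : ℝ))‖ := fun w => by
    rw [mul_assoc, norm_denom_isPMOne_mul hs, denom_mul_tMat]
  obtain ⟨hz, hz1⟩ := mem_isoSphere.mp hzh
  rw [hnorm] at hz1
  match L, hL with
  | [], _ => exact absurd (by simpa using hs.mul_tMat_apply_one_zero _) hc
  | [p], hL =>
    have hpa : p.1 = a := by
      by_contra hpa
      exact (hΓ.one_lt_norm_denom_letter_add hα' hβ' hL.head hz hzre hpa).ne' (by simpa using hz1)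
    refine ⟨p.2, hL.head.1, hL.head.2, isoSphere_eq_of_norm_denom_eq fun w => ?_⟩
    rw [hnorm, wordProd_cons, wordProd_nil, mul_one, denom_letter, hpa, add_sub_cancel_right]
  | p :: q :: L, hL =>
    refine absurd hz1 (hΓ.one_lt_norm_denom_wordProd_cons_cons hsep hL ?_ ?_).ne'
    · simpa using hz
    · exact hΓ.one_le_norm_denom_wordProd hsep hL.of_cons (by simpa using hz) fun r hr =>
        hΓ.one_le_norm_denom_letter_add hα' hβ' (hL.1 r (List.mem_cons_of_mem p hr)) hz hzre hzK a

end IsoDiscsInStrip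

lemma inter_frontier_inter_open_of_subset {X : Type*} [TopologicalSpace X] {A K U : Set X}
    (hU : IsOpen U) (hA : A ⊆ U) : A ∩ frontier (K ∩ U) = A ∩ frontier K := by
  calc A ∩ frontier (K ∩ U) = A ∩ (frontier (K ∩ U) ∩ U) := by
        rw [Set.inter_comm (frontier _) U, ← Set.inter_assoc, Set.inter_eq_left.mpr hA]
    _ = A ∩ (frontier K ∩ U) := by rw [frontier_inter_open_inter hU]
    _ = A ∩ frontier K := by
        rw [Set.inter_comm (frontier K) U, ← Set.inter_assoc, Set.inter_eq_left.mpr hA]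

lemma inter_frontier_inter_strip {A K : Set ℂ} {α β α' β' : ℝ} (hα' : α' < α) (hβ' : β < β')
    (hA : A ⊆ {z ∈ UH | α ≤ z.re ∧ z.re ≤ β}) :
    A ∩ (frontier (K ∩ {z ∈ UH | α' < z.re ∧ z.re < β'}) ∩ UH) = A ∩ (frontier K ∩ UH) := by
  have hS : IsOpen {z ∈ UH | α' < z.re ∧ z.re < β'} :=
    (isOpen_lt continuous_const continuous_im).inter
      ((isOpen_lt continuous_const continuous_re).inter (isOpen_lt continuous_re continuous_const))
  have hAS : A ⊆ {z ∈ UH | α' < z.re ∧ z.re < β'} := fun z hz =>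
    have hz' := hA hz
    ⟨hz'.1, by linarith [hz'.2.1], by linarith [hz'.2.2]⟩
  rw [← Set.inter_assoc, ← Set.inter_assoc, inter_frontier_inter_open_of_subset hS hAS]

lemma one_le_norm_denom_of_mem_closure_commonExt {Γ : Subgroup SL2R} {g : SL2R} (hg : g ∈ Γ)
    (hgn : ¬ IsPMOne g) {z : ℂ} (hz : z ∈ closure (commonExt Γ)) : 1 ≤ ‖denom g z‖ := by
  have hcont : Continuous fun w : ℂ => ‖denom g w‖ := by
    show Continuous fun w : ℂ => ‖(g 1 0 : ℂ) * w + g 1 1‖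
    fun_prop
  exact closure_minimal (t := {w | 1 ≤ ‖denom g w‖})
    (fun w hw => (Set.mem_iInter₂.mp hw g ⟨hg, hgn⟩).2.le) (isClosed_le continuous_const hcont) hz

lemma re_mem_Icc_of_mem_closure {α' β' : ℝ} {z : ℂ}
    (hz : z ∈ closure {w ∈ UH | α' < w.re ∧ w.re < β'}) : z.re ∈ Set.Icc α' β' :=
  closure_minimal (t := re ⁻¹' Set.Icc α' β') (fun _ hw => ⟨hw.2.1.le, hw.2.2.le⟩)
    (isClosed_Icc.preimage continuous_re) hz

theorem relevant_spheres_of_auxiliary_group_general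
    (Γ : Subgroup SL2R)
    (hstab : ∀ g ∈ Γ, g 1 0 = 0 → IsPMOne g)
    (α β : ℝ)
    (hbound : ∀ g ∈ Γ, ¬ IsPMOne g → isoSphere g ⊆ {z ∈ UH | α ≤ z.re ∧ z.re ≤ β})
    (α' β' : ℝ) (hα' : α' < α) (hβ' : β < β')
    (lam : ℝ) (hlam : lam = β' - α')
    (W : Set ℂ) (hW : W = commonExt Γ ∩ {z ∈ UH | α' < z.re ∧ z.re < β'})
    (ΓW : Subgroup SL2R) (hΓW : ΓW = Subgroup.closure ((Γ : Set SL2R) ∪ {tMat lam})) :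
    ∀ h ∈ ΓW, h 1 0 ≠ 0 →
      ((isoSphere h ∩ (frontier W ∩ UH)).Nontrivial ↔
        ∃ g ∈ Γ, ¬ IsPMOne g ∧ IsRelevant Γ g ∧ isoSphere h = isoSphere g) := by
  subst hlam hW hΓW
  have hΓ := isoDiscsInStrip_of_isoSphere_subset hstab hbound
  have hfr : ∀ g ∈ Γ, ¬ IsPMOne g →
      isoSphere g ∩ (frontier (commonExt Γ ∩ {z ∈ UH | α' < z.re ∧ z.re < β'}) ∩ UH) =
        isoSphere g ∩ (frontier (commonExt Γ) ∩ UH) := fun g hg hgn =>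
    inter_frontier_inter_strip hα' hβ' (hbound g hg hgn)
  intro h hh hc
  constructor
  · intro hNT
    obtain ⟨z, hzh, hzW, -⟩ := hNT.nonempty
    have hzW := frontier_subset_closure hzW
    obtain ⟨g, hg, hgn, hhg⟩ := hΓ.exists_isoSphere_eq hα' hβ' hh hc hzh
      (re_mem_Icc_of_mem_closure (closure_mono Set.inter_subset_right hzW))
      fun g hg hgn => one_le_norm_denom_of_mem_closure_commonExt hg hgn
        (closure_mono Set.inter_subset_left hzW)
    exact ⟨g, hg, hgn, by rwa [IsRelevant, ← hfr g hg hgn, ← hhg], hhg⟩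
  · rintro ⟨g, hg, hgn, hrel, hhg⟩
    rwa [hhg, hfr g hg hgn]

/-- the isometric spheres of `Γ_W` contributing non-trivially to
the boundary of `W` are exactly the relevant isometric spheres of `Γ`. -/
theorem relevant_spheres_of_auxiliary_group
    (Γ : Subgroup SL2R) (hdisc : IsDiscreteSubgroup Γ)
    (hne : ∃ g ∈ Γ, ¬ IsPMOne g)
    (hstab : ∀ g ∈ Γ, g 1 0 = 0 → IsPMOne g)
    (α β : ℝ) (hαβ : α ≤ β)
    (hbound : ∀ g ∈ Γ, ¬ IsPMOne g → isoSphere g ⊆ {z ∈ UH | α ≤ z.re ∧ z.re ≤ β})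
    (α' β' : ℝ) (hα' : α' < α) (hβ' : β < β')
    (lam : ℝ) (hlam : lam = β' - α')
    (W : Set ℂ) (hW : W = commonExt Γ ∩ {z ∈ UH | α' < z.re ∧ z.re < β'})
    (ΓW : Subgroup SL2R) (hΓW : ΓW = Subgroup.closure ((Γ : Set SL2R) ∪ {tMat lam})) :
    ∀ h ∈ ΓW, h 1 0 ≠ 0 →
      ((isoSphere h ∩ (frontier W ∩ UH)).Nontrivial ↔
        ∃ g ∈ Γ, ¬ IsPMOne g ∧ IsRelevant Γ g ∧ isoSphere h = isoSphere g) :=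
  relevant_spheres_of_auxiliary_group_general Γ hstab α β hbound α' β' hα' hβ' lam hlam W hW ΓW hΓW
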